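/- For a, b, c > 0 and z ∈ (0,1), with u(z) = F(a-1,b;c;z), v(z) = F(a,b;c;z), u₁(z) = u(1-z), v₁(z) = v(1-z), the function φ(z) = u(z)v₁(z) + u₁(z)v(z) - v(z)v₁(z) satisfies z(1-z) φ'(z) = (1 - a - b)[(1-z)u(z)v₁(z) - z u₁(z)v(z) - (1-2z)v(z)v₁(z)]. -/

import Mathlib

/-! The identity is a consequence of two of Gauss's contiguous relations for
`F(a) = ₂F₁(a, b; c; ·)` on the unit disc, `x F'(a) = a (F(a+1) - F(a))` and
`x (1 - x) F'(a) = (c - a) F(a-1) + (a - c + b x) F(a)`, each of which is an identity between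
the coefficients of two power series. Differentiating `φ` by the product rule and applying the
first relation to `u = F(a-1)` and the second to `v = F(a)`, at `z` and at `1 - z`, turns
`z (1 - z) φ'(z)` into the stated combination of `u, v, u₁, v₁`. -/

open Real Set

/-- The Gaussian hypergeometric function ₂F₁(a,b;c;x) as a power series sum. -/
noncomputable def hyperF (a b c x : ℝ) : ℝ :=
  ∑' n : ℕ, Polynomial.eval a (ascPochhammer ℝ n) * Polynomial.eval b (ascPochhammer ℝ n) /
      (Polynomial.eval c (ascPochhammer ℝ n) * (n.factorial : ℝ)) * x ^ n

open Polynomial FormalMultilinearSeries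
open scoped Nat

theorem ascPochhammer_succ_eval_left {S : Type*} [CommSemiring S] (a : S) (n : ℕ) :
    (ascPochhammer S (n + 1)).eval a = a * (ascPochhammer S n).eval (a + 1) := by
  rw [ascPochhammer_succ_left]
  simp [eval_comp]

theorem hasSum_pow_succ_mul_iff {R : Type*} [Ring R] [TopologicalSpace R]
    [IsTopologicalAddGroup R] {g : ℕ → R} {x s : R} :
    HasSum (fun n => x ^ (n + 1) * g (n + 1)) (s - g 0) ↔ HasSum (fun n => x ^ n * g n) s := by
  simpa using hasSum_nat_add_iff' 1 (f := fun n => x ^ n * g n)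

theorem FormalMultilinearSeries.hasSum_deriv_sum {𝕜 F : Type*} [NontriviallyNormedField 𝕜]
    [NormedAddCommGroup F] [NormedSpace 𝕜 F] [CompleteSpace F]
    (p : FormalMultilinearSeries 𝕜 𝕜 F) {x : 𝕜} (hx : ‖x‖ₑ < p.radius) :
    HasSum (fun n => x ^ n • (n + 1) • p.coeff (n + 1)) (deriv p.sum x) := by
  have h := (p.derivSeries.hasSum (x := x) (by
    simpa using hx.trans_le p.radius_le_radius_derivSeries)).mapL
    (ContinuousLinearMap.apply 𝕜 F 1)
  rw [(p.hasFDerivAt_sum hx).hasDerivAt.deriv]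
  simpa [apply_eq_pow_smul_coeff] using h

section Field

variable {𝕂 : Type*} [Field 𝕂] (a b c : 𝕂)

theorem ordinaryHypergeometricCoefficient_zero :
    ordinaryHypergeometricCoefficient a b c 0 = 1 := by
  simp [ordinaryHypergeometricCoefficient]

theorem natCast_mul_ordinaryHypergeometricCoefficient (n : ℕ) :
    n * ordinaryHypergeometricCoefficient a b c n =
      a * (ordinaryHypergeometricCoefficient (a + 1) b c n -
        ordinaryHypergeometricCoefficient a b c n) := by
  have h := (ascPochhammer_succ_eval_left a n).symm.trans (ascPochhammer_succ_eval n a)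
  linear_combination (-((n !⁻¹ : 𝕂) * (ascPochhammer 𝕂 n).eval b *
    ((ascPochhammer 𝕂 n).eval c)⁻¹)) * h

theorem succ_mul_ordinaryHypergeometricCoefficient_succ_sub [CharZero 𝕂] (n : ℕ)
    (hc : c + n ≠ 0) :
    (n + 1) * ordinaryHypergeometricCoefficient a b c (n + 1) -
        n * ordinaryHypergeometricCoefficient a b c n =
      (c - a) * ordinaryHypergeometricCoefficient (a - 1) b c (n + 1) +
        (a - c) * ordinaryHypergeometricCoefficient a b c (n + 1) +
        b * ordinaryHypergeometricCoefficient a b c n := by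
  have hn : ((n : 𝕂) + 1) * ((n : 𝕂) + 1)⁻¹ = 1 :=
    mul_inv_cancel₀ (by exact_mod_cast n.succ_ne_zero)
  have hcn : (c + n) * (c + n)⁻¹ = 1 := mul_inv_cancel₀ hc
  simp only [ordinaryHypergeometricCoefficient]
  rw [ascPochhammer_succ_eval_left (a - 1), sub_add_cancel]
  simp only [ascPochhammer_succ_eval, Nat.factorial_succ, Nat.cast_mul, Nat.cast_add,
    Nat.cast_one, mul_inv]
  linear_combination ((n !⁻¹ : 𝕂) * (ascPochhammer 𝕂 n).eval a * (ascPochhammer 𝕂 n).eval b *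
    ((ascPochhammer 𝕂 n).eval c)⁻¹ * (b + n)) * ((c + n)⁻¹ * (c + n) * hn + hcn)

end Field

section RCLike

variable {𝕂 : Type*} [RCLike 𝕂]

theorem one_le_radius_ordinaryHypergeometricSeries (𝔸 : Type*) [NormedDivisionRing 𝔸]
    [NormedAlgebra 𝕂 𝔸] (a b c : 𝕂) (hc : ∀ k : ℕ, (k : 𝕂) ≠ -c) :
    1 ≤ (ordinaryHypergeometricSeries 𝔸 a b c).radius := by
  by_cases ha : ∃ k : ℕ, (k : 𝕂) = -a
  · obtain ⟨k, hk⟩ := ha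
    rw [neg_eq_iff_eq_neg.mp hk.symm, ordinaryHypergeometric_radius_top_of_neg_nat₁]
    exact le_top
  by_cases hb : ∃ k : ℕ, (k : 𝕂) = -b
  · obtain ⟨k, hk⟩ := hb
    rw [neg_eq_iff_eq_neg.mp hk.symm, ordinaryHypergeometric_radius_top_of_neg_nat₂]
    exact le_top
  push Not at ha hb
  rw [ordinaryHypergeometricSeries_radius_eq_one 𝔸 a b c fun k => ⟨ha k, hb k, hc k⟩]

theorem coeff_ordinaryHypergeometricSeries (a b c : 𝕂) (n : ℕ) :
    (ordinaryHypergeometricSeries 𝕂 a b c).coeff n = ordinaryHypergeometricCoefficient a b c n :=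
  coeff_ofScalars

variable (a b : 𝕂) {c x : 𝕂} (hc : ∀ k : ℕ, (k : 𝕂) ≠ -c) (hx : ‖x‖ < 1)
include hc hx

theorem enorm_lt_radius_ordinaryHypergeometricSeries :
    ‖x‖ₑ < (ordinaryHypergeometricSeries 𝕂 a b c).radius :=
  lt_of_lt_of_le (ENNReal.coe_lt_one_iff.mpr (mod_cast hx))
    (one_le_radius_ordinaryHypergeometricSeries 𝕂 a b c hc)

theorem hasSum_ordinaryHypergeometric :
    HasSum (fun n => x ^ n * ordinaryHypergeometricCoefficient a b c n) (₂F₁ a b c x) := by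
  have h := (ordinaryHypergeometricSeries 𝕂 a b c).hasSum
    (by simpa using enorm_lt_radius_ordinaryHypergeometricSeries a b hc hx)
  simp only [apply_eq_pow_smul_coeff, coeff_ordinaryHypergeometricSeries, smul_eq_mul] at h
  exact h

theorem differentiableAt_ordinaryHypergeometric : DifferentiableAt 𝕂 (₂F₁ a b c) x :=
  ((ordinaryHypergeometricSeries 𝕂 a b c).hasFDerivAt_sum
    (enorm_lt_radius_ordinaryHypergeometricSeries a b hc hx)).differentiableAt

theorem hasSum_deriv_ordinaryHypergeometric :
    HasSum (fun n => x ^ n * ((n + 1) * ordinaryHypergeometricCoefficient a b c (n + 1)))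
      (deriv (₂F₁ a b c) x) := by
  have h := (ordinaryHypergeometricSeries 𝕂 a b c).hasSum_deriv_sum
      (enorm_lt_radius_ordinaryHypergeometricSeries a b hc hx)
  simp only [coeff_ordinaryHypergeometricSeries, nsmul_eq_mul, smul_eq_mul, Nat.cast_add,
    Nat.cast_one] at h
  exact h

theorem hasSum_mul_deriv_ordinaryHypergeometric :
    HasSum (fun n => x ^ n * (n * ordinaryHypergeometricCoefficient a b c n))
      (x * deriv (₂F₁ a b c) x) := by
  rw [← hasSum_pow_succ_mul_iff]
  simpa [pow_succ, mul_assoc, mul_left_comm] using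
    (hasSum_deriv_ordinaryHypergeometric a b hc hx).mul_left x

theorem mul_deriv_ordinaryHypergeometric :
    x * deriv (₂F₁ a b c) x = a * (₂F₁ (a + 1) b c x - ₂F₁ a b c x) := by
  refine (hasSum_mul_deriv_ordinaryHypergeometric a b hc hx).unique
    ((((hasSum_ordinaryHypergeometric (a + 1) b hc hx).sub
      (hasSum_ordinaryHypergeometric a b hc hx)).mul_left a).congr_fun fun n => ?_)
  rw [natCast_mul_ordinaryHypergeometricCoefficient]
  ring

theorem mul_one_sub_mul_deriv_ordinaryHypergeometric :
    x * (1 - x) * deriv (₂F₁ a b c) x =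
      (c - a) * ₂F₁ (a - 1) b c x + (a - c + b * x) * ₂F₁ a b c x := by
  let g n := (c - a) * ordinaryHypergeometricCoefficient (a - 1) b c n +
    (a - c) * ordinaryHypergeometricCoefficient a b c n
  have hg : HasSum (fun n => x ^ n * g n)
      ((c - a) * ₂F₁ (a - 1) b c x + (a - c) * ₂F₁ a b c x) :=
    (((hasSum_ordinaryHypergeometric (a - 1) b hc hx).mul_left (c - a)).add
      ((hasSum_ordinaryHypergeometric a b hc hx).mul_left (a - c))).congr_fun fun n => by ring
  have hg_zero : g 0 = 0 := by
    simp only [g, ordinaryHypergeometricCoefficient_zero]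
    ring
  have hg_shift : HasSum (fun n => x ^ (n + 1) * g (n + 1))
      ((c - a) * ₂F₁ (a - 1) b c x + (a - c) * ₂F₁ a b c x) := by
    simpa [hg_zero] using hasSum_pow_succ_mul_iff.mpr hg
  have hbx : HasSum (fun n => x ^ (n + 1) * (b * ordinaryHypergeometricCoefficient a b c n))
      (b * x * ₂F₁ a b c x) :=
    ((hasSum_ordinaryHypergeometric a b hc hx).mul_left (b * x)).congr_fun fun n => by ring
  have hderiv : HasSum (fun n => x ^ (n + 1) * g (n + 1) +
        x ^ (n + 1) * (b * ordinaryHypergeometricCoefficient a b c n))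
      (x * (deriv (₂F₁ a b c) x - x * deriv (₂F₁ a b c) x)) := by
    refine (((hasSum_deriv_ordinaryHypergeometric a b hc hx).sub
      (hasSum_mul_deriv_ordinaryHypergeometric a b hc hx)).mul_left x).congr_fun fun n => ?_
    have hcn : c + n ≠ 0 := fun h => hc n (by linear_combination h)
    rw [pow_succ, ← mul_sub, succ_mul_ordinaryHypergeometricCoefficient_succ_sub a b c n hcn]
    ring
  linear_combination hderiv.unique (hg_shift.add hbx)

end RCLike

theorem hyperF_eq_ordinaryHypergeometric (a b c x : ℝ) : hyperF a b c x = ₂F₁ a b c x := by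
  rw [hyperF, ordinaryHypergeometric, ordinaryHypergeometric_sum_eq]
  refine tsum_congr fun n => ?_
  rw [smul_eq_mul, div_eq_mul_inv, mul_inv]
  ring

theorem hyperF_phi_deriv (a b c : ℝ) (hc : 0 < c)
    (z : ℝ) (hz : z ∈ Set.Ioo (0 : ℝ) 1) :
    z * (1 - z) *
        deriv (fun t => hyperF (a - 1) b c t * hyperF a b c (1 - t) +
          hyperF (a - 1) b c (1 - t) * hyperF a b c t -
          hyperF a b c t * hyperF a b c (1 - t)) z =
      (1 - a - b) *
        ((1 - z) * hyperF (a - 1) b c z * hyperF a b c (1 - z) -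
          z * hyperF (a - 1) b c (1 - z) * hyperF a b c z -
          (1 - 2 * z) * hyperF a b c z * hyperF a b c (1 - z)) := by
  obtain ⟨hz₀, hz₁⟩ := hz
  have hc' : ∀ k : ℕ, (k : ℝ) ≠ -c := fun k hk => by linarith [k.cast_nonneg (α := ℝ)]
  have hx : ‖z‖ < 1 := by rw [Real.norm_eq_abs, abs_lt]; constructor <;> linarith
  have hx₁ : ‖1 - z‖ < 1 := by rw [Real.norm_eq_abs, abs_lt]; constructor <;> linarith
  simp only [hyperF_eq_ordinaryHypergeometric]
  have du := (differentiableAt_ordinaryHypergeometric (a - 1) b hc' hx).hasDerivAt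
  have dv := (differentiableAt_ordinaryHypergeometric a b hc' hx).hasDerivAt
  have du₁ :=
    (differentiableAt_ordinaryHypergeometric (a - 1) b hc' hx₁).hasDerivAt.comp_const_sub
  have dv₁ := (differentiableAt_ordinaryHypergeometric a b hc' hx₁).hasDerivAt.comp_const_sub
  have dφ := ((du.mul dv₁).add (du₁.mul dv)).sub (dv.mul dv₁)
  simp only [Pi.mul_def, Pi.add_def, Pi.sub_def] at dφ
  rw [dφ.deriv]
  have hu := mul_deriv_ordinaryHypergeometric (a - 1) b hc' hx
  have hu₁ := mul_deriv_ordinaryHypergeometric (a - 1) b hc' hx₁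
  have hv := mul_one_sub_mul_deriv_ordinaryHypergeometric a b hc' hx
  have hv₁ := mul_one_sub_mul_deriv_ordinaryHypergeometric a b hc' hx₁
  rw [sub_add_cancel] at hu hu₁
  rw [sub_sub_cancel] at hv₁
  linear_combination ((1 - z) * ₂F₁ a b c (1 - z)) * hu - (z * ₂F₁ a b c z) * hu₁ +
    (₂F₁ (a - 1) b c (1 - z) - ₂F₁ a b c (1 - z)) * hv +
    (₂F₁ a b c z - ₂F₁ (a - 1) b c z) * hv₁
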